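/- Let d ≥ 2 be an integer and define N₂(t) = ∫₀^{2/t} [r^d / (1 + r²)^{(d+1)/2}] (1 − t²r²/4)^{(d−1)/2} dr for t > 0. Then liminf_{t → 0⁺} N₂(t) / ln(1/t) ≥ 1. -/

import Mathlib

open MeasureTheory Filter

/-!
Write `σ = (d + 1) / 2`. On `[1, 1/t]` Bernoulli's inequality gives both
`(1 - t²r²/4)^((d-1)/2) ≥ 1 - σ t²r²/4` and `r^d (1 + r²)^(-σ) ≥ 1/r - σ/r³`, and the latter factor
is at most `1/r`; so there the integrand is at least `1/r - σ/r³ - σ t² r / 4`, whose integral is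
`log (1/t) - O(1)`. Conversely the integrand is at most `min 1 (1/r)`, so `N₂(t) ≤ 1 + log (2/t)`.
Hence `N₂(t) / log (1/t) → 1`; the upper bound is not decorative, since `liminf` of a real
function that is not bounded above is a junk value.
-/

section PoissonHeatContent

open Real Set intervalIntegral Asymptotics Topology

theorem one_sub_mul_le_one_sub_rpow {p σ x : ℝ} (hpσ : p ≤ σ) (hσ : 1 ≤ σ)
    (hx0 : 0 ≤ x) (hx1 : x ≤ 1) : 1 - σ * x ≤ (1 - x) ^ p := by
  rcases le_total p 1 with hp1 | hp1
  · calc 1 - σ * x ≤ 1 - x := by nlinarith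
      _ ≤ (1 - x) ^ p := self_le_rpow_of_le_one (by linarith) (by linarith) hp1
  · calc 1 - σ * x ≤ 1 + p * -x := by nlinarith
      _ ≤ (1 + -x) ^ p := one_add_mul_self_le_rpow_one_add (by linarith) hp1
      _ = (1 - x) ^ p := by rw [← sub_eq_add_neg]

theorem tendsto_div_nhds_one_of_abs_sub_le {α : Type*} {l : Filter α} {f g : α → ℝ} {C : ℝ}
    (hg : Tendsto g l atTop) (hfg : ∀ᶠ x in l, |f x - g x| ≤ C) :
    Tendsto (fun x => f x / g x) l (𝓝 1) := by
  have hO : (f - g) =O[l] (fun _ => (1 : ℝ)) :=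
    (isBigO_one_iff ℝ).2 ⟨C, hfg.mono fun x hx => by simpa using hx⟩
  have ho : (fun _ => (1 : ℝ)) =o[l] g :=
    (isLittleO_one_left_iff ℝ).2 (tendsto_norm_atTop_atTop.comp hg)
  exact (isEquivalent_iff_tendsto_one (hg.eventually_ne_atTop 0)).1 (hO.trans_isLittleO ho)

theorem intervalIntegrable_inv_sub_div_pow_three_sub_mul {a b R : ℝ} (hR : 0 < R) :
    IntervalIntegrable (fun r => r⁻¹ - a / r ^ 3 - b * r) volume 1 R := by
  refine ContinuousOn.intervalIntegrable fun r hr => ?_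
  have hr0 : r ≠ 0 := ((lt_min one_pos hR).trans_le hr.1).ne'
  fun_prop (disch := simp [hr0])

theorem integral_inv_sub_div_pow_three_sub_mul {a b R : ℝ} (hR : 0 < R) :
    ∫ r in (1 : ℝ)..R, (r⁻¹ - a / r ^ 3 - b * r) =
      log R - a / 2 * (1 - (R ^ 2)⁻¹) - b / 2 * (R ^ 2 - 1) := by
  have hderiv : ∀ r ∈ uIcc 1 R, HasDerivAt (fun r => log r + a / 2 * (r ^ 2)⁻¹ - b / 2 * r ^ 2)
      (r⁻¹ - a / r ^ 3 - b * r) r := by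
    intro r hr
    have hr0 : r ≠ 0 := ((lt_min one_pos hR).trans_le hr.1).ne'
    refine (((hasDerivAt_log hr0).fun_add
      (((hasDerivAt_pow 2 r).fun_inv (pow_ne_zero 2 hr0)).const_mul (a / 2))).fun_sub
      ((hasDerivAt_pow 2 r).const_mul (b / 2))).congr_deriv ?_
    field_simp
    ring
  rw [integral_eq_sub_of_hasDerivAt hderiv (intervalIntegrable_inv_sub_div_pow_three_sub_mul hR)]
  simp only [log_one, one_pow, inv_one]
  ring

noncomputable def radialDensity (d : ℕ) (r : ℝ) : ℝ :=
  r ^ d / (1 + r ^ 2) ^ (((d : ℝ) + 1) / 2)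

noncomputable def ballCutoff (d : ℕ) (t r : ℝ) : ℝ :=
  (1 - t ^ 2 * r ^ 2 / 4) ^ (((d : ℝ) - 1) / 2)

noncomputable def poissonHeatIntegral (d : ℕ) (t : ℝ) : ℝ :=
  ∫ r in (0 : ℝ)..(2 / t), radialDensity d r * ballCutoff d t r

variable {d : ℕ} {t r : ℝ}

theorem continuous_radialDensity : Continuous (radialDensity d) :=
  (continuous_pow d).div (by fun_prop (disch := positivity))
    fun r => (rpow_pos_of_pos (by positivity) _).ne'

theorem radialDensity_nonneg (hr : 0 ≤ r) : 0 ≤ radialDensity d r := by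
  unfold radialDensity; positivity

theorem radialDensity_le_one (hr0 : 0 ≤ r) (hr1 : r ≤ 1) : radialDensity d r ≤ 1 := by
  rw [radialDensity, div_le_one (rpow_pos_of_pos (by positivity) _)]
  exact (pow_le_one₀ hr0 hr1).trans (one_le_rpow (by nlinarith) (by positivity))

theorem radialDensity_eq (hr : 0 < r) :
    radialDensity d r = (r ^ 2 / (1 + r ^ 2)) ^ (((d : ℝ) + 1) / 2) / r := by
  have hsq : (r ^ 2) ^ (((d : ℝ) + 1) / 2) = r ^ d * r := by
    rw [← rpow_natCast r 2, ← rpow_mul hr.le, ← pow_succ, ← rpow_natCast]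
    push_cast
    ring_nf
  rw [radialDensity, div_rpow (by positivity) (by positivity), hsq]
  field_simp

theorem radialDensity_le_inv (hr : 0 < r) : radialDensity d r ≤ r⁻¹ := by
  rw [radialDensity_eq hr, div_eq_mul_inv]
  refine mul_le_of_le_one_left (inv_nonneg.2 hr.le) (rpow_le_one (by positivity) ?_ (by positivity))
  rw [div_le_one (by positivity)]
  linarith

theorem inv_sub_le_radialDensity (hd : 1 ≤ d) (hr : 0 < r) :
    r⁻¹ - ((d : ℝ) + 1) / 2 / r ^ 3 ≤ radialDensity d r := by
  have hp : 1 ≤ ((d : ℝ) + 1) / 2 := by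
    have : (1 : ℝ) ≤ d := by exact_mod_cast hd
    linarith
  set p : ℝ := ((d : ℝ) + 1) / 2
  have hy : r ^ 2 / (1 + r ^ 2) = 1 - (1 + r ^ 2)⁻¹ := by field_simp; ring
  have hbern : 1 - p * (1 + r ^ 2)⁻¹ ≤ (r ^ 2 / (1 + r ^ 2)) ^ p := by
    rw [hy]
    exact one_sub_mul_le_one_sub_rpow le_rfl hp (by positivity)
      (inv_le_one_of_one_le₀ (by nlinarith))
  have hinv : (1 + r ^ 2)⁻¹ ≤ (r ^ 2)⁻¹ := inv_anti₀ (by positivity) (by linarith)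
  rw [radialDensity_eq hr]
  calc r⁻¹ - p / r ^ 3 = (1 - p * (r ^ 2)⁻¹) / r := by field_simp
    _ ≤ (1 - p * (1 + r ^ 2)⁻¹) / r := by gcongr
    _ ≤ (r ^ 2 / (1 + r ^ 2)) ^ p / r := by gcongr

theorem sq_mul_le_four (ht : 0 < t) (hr : r ∈ Icc 0 (2 / t)) : (t * r) ^ 2 ≤ 4 := by
  have htr : t * r ≤ 2 := by rw [← le_div_iff₀' ht]; exact hr.2
  nlinarith [mul_nonneg ht.le hr.1]

theorem ballCutoff_nonneg (h : (t * r) ^ 2 ≤ 4) : 0 ≤ ballCutoff d t r :=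
  rpow_nonneg (by nlinarith) _

theorem ballCutoff_le_one (hd : 1 ≤ d) (h : (t * r) ^ 2 ≤ 4) : ballCutoff d t r ≤ 1 := by
  have : (1 : ℝ) ≤ d := by exact_mod_cast hd
  exact rpow_le_one (by nlinarith) (by nlinarith [sq_nonneg (t * r)]) (by linarith)

theorem one_sub_mul_le_ballCutoff (hd : 1 ≤ d) (h : (t * r) ^ 2 ≤ 4) :
    1 - ((d : ℝ) + 1) / 2 * (t ^ 2 * r ^ 2 / 4) ≤ ballCutoff d t r := by
  have : (1 : ℝ) ≤ d := by exact_mod_cast hd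
  exact one_sub_mul_le_one_sub_rpow (by linarith) (by linarith) (by positivity)
    (by nlinarith [sq_nonneg (t * r)])

theorem continuous_ballCutoff (hd : 1 ≤ d) : Continuous (ballCutoff d t) := by
  have : (1 : ℝ) ≤ d := by exact_mod_cast hd
  unfold ballCutoff
  fun_prop (disch := linarith)

theorem radialDensity_mul_ballCutoff_le_one (hd : 1 ≤ d) (hr0 : 0 ≤ r) (hr1 : r ≤ 1)
    (h : (t * r) ^ 2 ≤ 4) : radialDensity d r * ballCutoff d t r ≤ 1 :=
  mul_le_one₀ (radialDensity_le_one hr0 hr1) (ballCutoff_nonneg h) (ballCutoff_le_one hd h)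

theorem radialDensity_mul_ballCutoff_le_inv (hd : 1 ≤ d) (hr : 0 < r) (h : (t * r) ^ 2 ≤ 4) :
    radialDensity d r * ballCutoff d t r ≤ r⁻¹ :=
  (mul_le_of_le_one_right (radialDensity_nonneg hr.le) (ballCutoff_le_one hd h)).trans
    (radialDensity_le_inv hr)

theorem inv_sub_le_radialDensity_mul_ballCutoff (hd : 1 ≤ d) (hr : 0 < r)
    (h : (t * r) ^ 2 ≤ 4) :
    r⁻¹ - ((d : ℝ) + 1) / 2 / r ^ 3 - ((d : ℝ) + 1) / 2 * t ^ 2 / 4 * r ≤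
      radialDensity d r * ballCutoff d t r := by
  set p : ℝ := ((d : ℝ) + 1) / 2
  have hpx : 0 ≤ p * (t ^ 2 * r ^ 2 / 4) := by positivity
  have hA := radialDensity_nonneg (d := d) hr.le
  calc r⁻¹ - p / r ^ 3 - p * t ^ 2 / 4 * r = r⁻¹ - p / r ^ 3 - p * (t ^ 2 * r ^ 2 / 4) * r⁻¹ := by
        field_simp
    _ ≤ radialDensity d r - p * (t ^ 2 * r ^ 2 / 4) * radialDensity d r := by
        gcongr
        · exact inv_sub_le_radialDensity hd hr
        · exact radialDensity_le_inv hr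
    _ = radialDensity d r * (1 - p * (t ^ 2 * r ^ 2 / 4)) := by ring
    _ ≤ radialDensity d r * ballCutoff d t r := by
        gcongr
        exact one_sub_mul_le_ballCutoff hd h

theorem log_sub_le_poissonHeatIntegral (hd : 1 ≤ d) (ht0 : 0 < t) (ht1 : t ≤ 1) :
    log (1 / t) - ((d : ℝ) + 1) / 2 ≤ poissonHeatIntegral d t := by
  set p : ℝ := ((d : ℝ) + 1) / 2
  have hp : 0 ≤ p := by positivity
  have hR : 1 ≤ 1 / t := by rw [le_div_iff₀ ht0]; linarith
  have hR2 : 1 / t ≤ 2 / t := by gcongr; norm_num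
  have hcont : Continuous fun r => radialDensity d r * ballCutoff d t r :=
    continuous_radialDensity.mul (continuous_ballCutoff hd)
  have hcomp : ∀ r ∈ Icc 1 (1 / t), r⁻¹ - p / r ^ 3 - p * t ^ 2 / 4 * r ≤
      radialDensity d r * ballCutoff d t r := fun r hr =>
    inv_sub_le_radialDensity_mul_ballCutoff hd (one_pos.trans_le hr.1)
      (sq_mul_le_four ht0 ⟨zero_le_one.trans hr.1, hr.2.trans hR2⟩)
  calc log (1 / t) - p
      ≤ log (1 / t) - p / 2 * (1 - ((1 / t) ^ 2)⁻¹) - p * t ^ 2 / 4 / 2 * ((1 / t) ^ 2 - 1) := by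
        field_simp
        nlinarith [sq_nonneg t]
    _ = ∫ r in (1 : ℝ)..(1 / t), (r⁻¹ - p / r ^ 3 - p * t ^ 2 / 4 * r) :=
        (integral_inv_sub_div_pow_three_sub_mul (by positivity)).symm
    _ ≤ ∫ r in (1 : ℝ)..(1 / t), radialDensity d r * ballCutoff d t r :=
        integral_mono_on hR (intervalIntegrable_inv_sub_div_pow_three_sub_mul (by positivity))
          (hcont.intervalIntegrable _ _) hcomp
    _ ≤ poissonHeatIntegral d t := by
        refine integral_mono_interval zero_le_one hR hR2 ?_ (hcont.intervalIntegrable _ _)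
        refine ae_restrict_of_forall_mem measurableSet_Ioc fun r hr => ?_
        exact mul_nonneg (radialDensity_nonneg hr.1.le)
          (ballCutoff_nonneg (sq_mul_le_four ht0 (Ioc_subset_Icc_self hr)))

theorem poissonHeatIntegral_le_log_add_two (hd : 1 ≤ d) (ht0 : 0 < t) (ht1 : t ≤ 1) :
    poissonHeatIntegral d t ≤ log (1 / t) + 2 := by
  have h2t : 1 ≤ 2 / t := by rw [le_div_iff₀ ht0]; linarith
  have hcont : Continuous fun r => radialDensity d r * ballCutoff d t r :=
    continuous_radialDensity.mul (continuous_ballCutoff hd)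
  have hnear : ∫ r in (0 : ℝ)..1, radialDensity d r * ballCutoff d t r ≤ 1 := by
    calc _ ≤ ∫ _ in (0 : ℝ)..1, (1 : ℝ) :=
          integral_mono_on zero_le_one (hcont.intervalIntegrable _ _) intervalIntegrable_const
            fun r hr => radialDensity_mul_ballCutoff_le_one hd hr.1 hr.2
              (sq_mul_le_four ht0 ⟨hr.1, hr.2.trans h2t⟩)
      _ = 1 := by simp
  have hfar : ∫ r in (1 : ℝ)..(2 / t), radialDensity d r * ballCutoff d t r ≤ log (2 / t) := by
    calc _ ≤ ∫ r in (1 : ℝ)..(2 / t), r⁻¹ :=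
          integral_mono_on h2t (hcont.intervalIntegrable _ _)
            (intervalIntegral.intervalIntegrable_inv
              (fun r hr => ((lt_min one_pos (by positivity)).trans_le hr.1).ne') continuousOn_id)
            fun r hr => radialDensity_mul_ballCutoff_le_inv hd (one_pos.trans_le hr.1)
              (sq_mul_le_four ht0 ⟨zero_le_one.trans hr.1, hr.2⟩)
      _ = log (2 / t) := by rw [integral_inv_of_pos one_pos (by positivity), div_one]
  have hlog : log (2 / t) = log 2 + log (1 / t) := by
    rw [← log_mul two_ne_zero (by positivity), mul_one_div]
  rw [poissonHeatIntegral, ← integral_add_adjacent_intervals (hcont.intervalIntegrable 0 1)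
    (hcont.intervalIntegrable 1 (2 / t))]
  linarith [log_two_lt_d9]

end PoissonHeatContent

theorem N2_liminf_ge_one (d : ℕ) (hd : 2 ≤ d) (N₂ : ℝ → ℝ)
    (hN₂ : ∀ t > 0, N₂ t =
      ∫ r in (0 : ℝ)..(2 / t),
        r ^ (d : ℕ) / (1 + r ^ 2) ^ (((d : ℝ) + 1) / 2) *
          (1 - t ^ 2 * r ^ 2 / 4) ^ (((d : ℝ) - 1) / 2)) :
    1 ≤ liminf (fun t => N₂ t / Real.log (1 / t)) (nhdsWithin 0 (Set.Ioi 0)) := by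
  have hd1 : 1 ≤ d := by omega
  have hlog : Tendsto (fun t : ℝ => Real.log (1 / t)) (nhdsWithin 0 (Set.Ioi 0)) atTop := by
    refine (tendsto_neg_atBot_atTop.comp Real.tendsto_log_nhdsGT_zero).congr fun t => ?_
    simp
  have hclose : ∀ᶠ t in nhdsWithin 0 (Set.Ioi 0),
      |N₂ t - Real.log (1 / t)| ≤ ((d : ℝ) + 1) / 2 + 2 := by
    filter_upwards [Ioc_mem_nhdsGT one_pos] with t ⟨ht0, ht1⟩
    have hN : N₂ t = poissonHeatIntegral d t := hN₂ t ht0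
    rw [hN, abs_sub_le_iff]
    have hp : (0 : ℝ) ≤ ((d : ℝ) + 1) / 2 := by positivity
    constructor <;> linarith [log_sub_le_poissonHeatIntegral hd1 ht0 ht1,
      poissonHeatIntegral_le_log_add_two hd1 ht0 ht1]
  exact (tendsto_div_nhds_one_of_abs_sub_le hlog hclose).liminf_eq.ge
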